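/- Let A be a bounded self-adjoint operator on a separable infinite-dimensional Hilbert space H with inf_{‖x‖=1} ⟨Ax, x⟩ > 0, whose eigenvectors span a dense subspace of H. Let τ > 0 be such that every nonempty subset of A⁺ := σ_p(A) ∩ (τ, +∞) has a maximal element, every nonempty subset of A⁻ := σ_p(A) ∩ (0, τ) has a minimal element, and every eigenvalue in A⁺ ∪ A⁻ has a finite-dimensional eigenspace. Let H⁺ (respectively H⁻) be the closed linear span of all eigenvectors of A whose eigenvalue lies in A⁺ (respectively in A⁻). Let T : H → H be a linear operator which maps the ellipsoid E = {x ∈ H : ⟨x, Ax⟩ ≤ 1} bijectively onto itself and whose restriction to E is non-expansive. Then T(H⁻) = H⁻, T(H⁺) = H⁺, and the restrictions of T to H⁻ and to H⁺ are bijective isometries. -/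

import Mathlib

/-- The closed linear span of all eigenvectors of `A` whose (real) eigenvalue lies in the
set `B ⊆ ℝ`, i.e. the topological closure of the sum of the corresponding eigenspaces. -/
def closedEigenSpan {𝕜 H : Type*} [RCLike 𝕜] [NormedAddCommGroup H]
    [InnerProductSpace 𝕜 H] (A : H →L[𝕜] H) (B : Set ℝ) : Submodule 𝕜 H :=
  (⨆ μ ∈ B, Module.End.eigenspace (A : H →ₗ[𝕜] H) (μ : 𝕜)).topologicalClosure

/-!
Write `q x = re ⟪x, A x⟫` and `E_μ` for the eigenspace of `μ`. A linear map sending the ellipsoid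
`{q ≤ 1}` bijectively onto itself preserves `q`, hence by polarization `⟪T x, A (T y)⟫ = ⟪x, A y⟫`;
non-expansiveness on the ellipsoid scales to `‖T x‖ ≤ ‖x‖`.

Let `μ > τ` be an eigenvalue such that `T E_ν = E_ν` for all eigenvalues `ν > μ` (the eigenvalues
above `τ` are well-ordered by `>`, so this is an induction). For `z ∈ E_μ`, `T z` is orthogonal to
every `T E_ν = E_ν` with `ν > μ`, so it lies in the closed span of the eigenspaces with eigenvalue
`≤ μ`, where `q ≤ μ ‖·‖²`. Since `q (T z) = μ ‖z‖² ≥ μ ‖T z‖²`, equality holds, and equality in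
`q ≤ μ ‖·‖²` on that span forces `T z ∈ E_μ`. As `E_μ` is finite-dimensional, `T E_μ = E_μ`.
The eigenvalues in `(0, τ)` are the eigenvalues above `-τ` of `-A`, treated with `T⁻¹`.

On each `E_μ` that `T` maps onto itself, `A`-unitarity makes `T` preserve inner products, so `T` is
an isometry of the closed span onto itself (the image is closed since `T⁻¹` is bounded).
-/

open Module.End Set RCLike
open scoped InnerProductSpace

section EigenSpan

variable {𝕜 H : Type*} [RCLike 𝕜] [NormedAddCommGroup H] [InnerProductSpace 𝕜 H]
  {A : H →L[𝕜] H}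

theorem Module.End.eigenspace_neg {R M : Type*} [CommRing R] [AddCommGroup M] [Module R M]
    (f : Module.End R M) (μ : R) : eigenspace (-f) μ = eigenspace f (-μ) := by
  ext x
  simp only [mem_eigenspace_iff, LinearMap.neg_apply, neg_smul, neg_eq_iff_eq_neg]

theorem closedEigenSpan_neg (B : Set ℝ) : closedEigenSpan (-A) (-B) = closedEigenSpan A B := by
  simp only [closedEigenSpan, ← image_neg_eq_neg, iSup_image, ContinuousLinearMap.toLinearMap_neg,
    eigenspace_neg, ofReal_neg, neg_neg]

theorem eigenspace_le_closedEigenSpan {B : Set ℝ} {μ : ℝ} (hμ : μ ∈ B) :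
    eigenspace (A : H →ₗ[𝕜] H) μ ≤ closedEigenSpan A B :=
  (le_iSup₂_of_le (f := fun ν (_ : ν ∈ B) => eigenspace (A : H →ₗ[𝕜] H) ν) μ hμ le_rfl).trans
    (Submodule.le_topologicalClosure _)

theorem apply_mem_closedEigenSpan {B : Set ℝ} {x : H} (hx : x ∈ closedEigenSpan A B) :
    A x ∈ closedEigenSpan A B := by
  refine Submodule.topologicalClosure_minimal (t := (closedEigenSpan A B).comap
    (A : H →ₗ[𝕜] H)) _ (iSup₂_le fun μ hμ y hy => ?_)
    ((Submodule.isClosed_topologicalClosure _).preimage A.continuous) hx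
  rw [Submodule.mem_comap, mem_eigenspace_iff.mp hy]
  exact eigenspace_le_closedEigenSpan hμ (Submodule.smul_mem _ _ hy)

theorem mem_orthogonal_closedEigenSpan_iff {B : Set ℝ} {x : H} :
    x ∈ (closedEigenSpan A B)ᗮ ↔ ∀ μ ∈ B, x ∈ (eigenspace (A : H →ₗ[𝕜] H) μ)ᗮ := by
  simp only [closedEigenSpan, Submodule.orthogonal_closure, ← Submodule.iInf_orthogonal,
    Submodule.mem_iInf]
  refine forall_congr' fun μ => ?_
  by_cases hμ : μ ∈ B <;> simp [hμ]

theorem LinearMap.IsSymmetric.orthogonalFamily_eigenspaces_ofReal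
    (hA : (A : H →ₗ[𝕜] H).IsSymmetric) :
    OrthogonalFamily 𝕜 (fun μ : ℝ => eigenspace (A : H →ₗ[𝕜] H) μ)
      fun μ => (eigenspace (A : H →ₗ[𝕜] H) μ).subtypeₗᵢ :=
  hA.orthogonalFamily_eigenspaces.comp RCLike.ofReal_injective

theorem closedEigenSpan_univ_eq_top (hA : (A : H →ₗ[𝕜] H).IsSymmetric)
    (hdense : (⨆ μ : 𝕜, eigenspace (A : H →ₗ[𝕜] H) μ).topologicalClosure = ⊤) :
    closedEigenSpan A univ = ⊤ := by
  refine eq_top_iff.mpr (hdense ▸ Submodule.topologicalClosure_mono (iSup_le fun μ => ?_))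
  by_cases hμ : HasEigenvalue (A : H →ₗ[𝕜] H) μ
  · have hreal : ((re μ : ℝ) : 𝕜) = μ := conj_eq_iff_re.mp (hA.conj_eigenvalue_eq_self hμ)
    exact le_iSup₂_of_le (f := fun (ν : ℝ) (_ : ν ∈ univ) => eigenspace (A : H →ₗ[𝕜] H) ν)
      (re μ) (mem_univ _) (by rw [hreal])
  · rw [hasEigenvalue_iff, not_not] at hμ
    exact hμ ▸ bot_le

theorem re_inner_self_apply_of_mem_eigenspace {μ : ℝ} {x : H}
    (hx : x ∈ eigenspace (A : H →ₗ[𝕜] H) μ) : re ⟪x, A x⟫_𝕜 = μ * ‖x‖ ^ 2 := by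
  rw [← ContinuousLinearMap.coe_coe, mem_eigenspace_iff.mp hx, inner_smul_right, re_ofReal_mul,
    inner_self_eq_norm_sq]

theorem pos_of_hasEigenvalue (hq : ∀ x : H, x ≠ 0 → 0 < re ⟪x, A x⟫_𝕜) {μ : ℝ}
    (hμ : HasEigenvalue (A : H →ₗ[𝕜] H) μ) : 0 < μ := by
  obtain ⟨v, hv, hv0⟩ := hμ.exists_hasEigenvector
  have := hq v hv0
  rw [re_inner_self_apply_of_mem_eigenspace hv] at this
  exact pos_of_mul_pos_left this (sq_nonneg _)

theorem exists_finsupp_of_mem_iSup_eigenspace {B : Set ℝ} {x : H}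
    (hx : x ∈ ⨆ μ ∈ B, eigenspace (A : H →ₗ[𝕜] H) μ) :
    ∃ f : ℝ →₀ H, (∀ μ : ℝ, f μ ∈ eigenspace (A : H →ₗ[𝕜] H) μ) ∧ (∀ μ ∈ f.support, μ ∈ B) ∧
      ∑ μ ∈ f.support, f μ = x := by
  obtain ⟨f, hf, rfl⟩ := (Submodule.mem_iSup_iff_exists_finsupp _ x).mp hx
  refine ⟨f, fun μ => ?_, fun μ hμ => ?_, rfl⟩
  · exact (iSup_le fun _ => le_rfl : (⨆ _ : μ ∈ B, eigenspace (A : H →ₗ[𝕜] H) μ) ≤ _) (hf μ)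
  · by_contra hμB
    exact Finsupp.mem_support_iff.mp hμ (by simpa [hμB] using hf μ)

theorem re_inner_self_apply_le_of_mem_closedEigenSpan (hA : (A : H →ₗ[𝕜] H).IsSymmetric)
    {B : Set ℝ} {μ : ℝ} (hB : ∀ ν ∈ B, ν ≤ μ) {x : H} (hx : x ∈ closedEigenSpan A B) :
    re ⟪x, A x⟫_𝕜 ≤ μ * ‖x‖ ^ 2 := by
  refine closure_minimal (t := {y : H | re ⟪y, A y⟫_𝕜 ≤ μ * ‖y‖ ^ 2}) (fun x hx => ?_)
    (isClosed_le (by fun_prop) (by fun_prop)) hx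
  obtain ⟨f, hf, hfB, rfl⟩ := exists_finsupp_of_mem_iSup_eigenspace hx
  have hgap : (μ : 𝕜) • ∑ ν ∈ f.support, f ν - A (∑ ν ∈ f.support, f ν)
      = ∑ ν ∈ f.support, ((μ - ν : ℝ) : 𝕜) • f ν := by
    simp only [map_sum, Finset.smul_sum, ← Finset.sum_sub_distrib]
    refine Finset.sum_congr rfl fun ν _ => ?_
    rw [← ContinuousLinearMap.coe_coe, mem_eigenspace_iff.mp (hf ν), ofReal_sub, sub_smul]
  have hnn : 0 ≤ re ⟪∑ ν ∈ f.support, f ν, (μ : 𝕜) • ∑ ν ∈ f.support, f ν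
      - A (∑ ν ∈ f.support, f ν)⟫_𝕜 := by
    have horth := hA.orthogonalFamily_eigenspaces_ofReal.inner_sum (fun ν => ⟨f ν, hf ν⟩)
      (fun ν => ⟨((μ - ν : ℝ) : 𝕜) • f ν, Submodule.smul_mem _ _ (hf ν)⟩) f.support
    simp only [Submodule.coe_subtypeₗᵢ, Submodule.coe_subtype, Submodule.coe_inner] at horth
    rw [hgap, horth, map_sum]
    refine Finset.sum_nonneg fun ν hν => ?_
    rw [inner_smul_right, re_ofReal_mul, inner_self_eq_norm_sq]
    exact mul_nonneg (sub_nonneg.mpr (hB ν (hfB ν hν))) (sq_nonneg _)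
  rw [inner_sub_right, inner_smul_right, map_sub, re_ofReal_mul, inner_self_eq_norm_sq] at hnn
  rw [mem_ofPred_eq]
  linarith

theorem LinearMap.IsSymmetric.apply_eq_zero_of_re_inner_eq_zero {T : H →ₗ[𝕜] H}
    (hT : T.IsSymmetric) {V : Submodule 𝕜 H} (hV : ∀ v ∈ V, 0 ≤ re ⟪v, T v⟫_𝕜) {x : H}
    (hx : x ∈ V) (hTx : T x ∈ V) (h : re ⟪x, T x⟫_𝕜 = 0) : T x = 0 := by
  -- `t ↦ re ⟪v, T v⟫` at `v = x + t • T x` is a nonnegative quadratic with no constant term,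
  -- so its linear coefficient `2 ‖T x‖²` vanishes
  have hquad : ∀ t : ℝ, 0 ≤ re ⟪T x, T (T x)⟫_𝕜 * (t * t) + 2 * ‖T x‖ ^ 2 * t + 0 := by
    intro t
    have := hV _ (V.add_mem hx (V.smul_mem (t : 𝕜) hTx))
    rw [map_add, map_smul, inner_add_left, inner_add_right, inner_add_right, inner_smul_left,
      inner_smul_right, inner_smul_left, inner_smul_right, ← hT x (T x), conj_ofReal] at this
    simp only [map_add, re_ofReal_mul, h, inner_self_eq_norm_sq] at this
    linarith
  have := discrim_le_zero hquad
  rw [discrim] at this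
  have : ‖T x‖ ^ 2 = 0 := by nlinarith [sq_nonneg (‖T x‖ ^ 2)]
  simpa using this

theorem mem_eigenspace_of_re_inner_self_apply_eq (hA : (A : H →ₗ[𝕜] H).IsSymmetric)
    {B : Set ℝ} {μ : ℝ} (hB : ∀ ν ∈ B, ν ≤ μ) {x : H} (hx : x ∈ closedEigenSpan A B)
    (heq : re ⟪x, A x⟫_𝕜 = μ * ‖x‖ ^ 2) : x ∈ eigenspace (A : H →ₗ[𝕜] H) μ := by
  set P : H →ₗ[𝕜] H := (μ : 𝕜) • LinearMap.id - (A : H →ₗ[𝕜] H)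
  have hP : P.IsSymmetric := (LinearMap.IsSymmetric.id.smul (conj_ofReal μ)).sub hA
  have hre : ∀ v, re ⟪v, P v⟫_𝕜 = μ * ‖v‖ ^ 2 - re ⟪v, A v⟫_𝕜 := fun v => by
    simp [P, inner_sub_right, inner_smul_right]
  have hPx : P x = 0 := hP.apply_eq_zero_of_re_inner_eq_zero (V := closedEigenSpan A B)
    (fun v hv => by linarith [hre v, re_inner_self_apply_le_of_mem_closedEigenSpan hA hB hv]) hx
    (sub_mem (Submodule.smul_mem _ _ hx) (apply_mem_closedEigenSpan hx)) (by linarith [hre x])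
  exact mem_eigenspace_iff.mpr (sub_eq_zero.mp hPx).symm

theorem inner_map_map_of_mem_eigenspace {S : H →ₗ[𝕜] H}
    (hSA : ∀ x y : H, ⟪S x, A (S y)⟫_𝕜 = ⟪x, A y⟫_𝕜) {μ : 𝕜} (hμ : μ ≠ 0) {y : H}
    (hy : y ∈ eigenspace (A : H →ₗ[𝕜] H) μ) (hSy : S y ∈ eigenspace (A : H →ₗ[𝕜] H) μ) (x : H) :
    ⟪S x, S y⟫_𝕜 = ⟪x, y⟫_𝕜 := by
  have := hSA x y
  rw [← ContinuousLinearMap.coe_coe, mem_eigenspace_iff.mp hy, mem_eigenspace_iff.mp hSy,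
    inner_smul_right, inner_smul_right] at this
  exact mul_left_cancel₀ hμ this

theorem inner_map_map_of_mem_closedEigenSpan {T : H →ₗ[𝕜] H} (hT : Continuous T)
    (hTA : ∀ x y : H, ⟪T x, A (T y)⟫_𝕜 = ⟪x, A y⟫_𝕜) {D : Set ℝ} (hD0 : 0 ∉ D)
    (hmap : ∀ μ ∈ D, (eigenspace (A : H →ₗ[𝕜] H) μ).map T = eigenspace (A : H →ₗ[𝕜] H) μ)
    (x : H) {y : H} (hy : y ∈ closedEigenSpan A D) : ⟪T x, T y⟫_𝕜 = ⟪x, y⟫_𝕜 := by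
  refine Submodule.topologicalClosure_minimal
    (t := ((innerₛₗ 𝕜 (T x)).comp T).eqLocus (innerₛₗ 𝕜 x)) _ (iSup₂_le fun μ hμ z hz => ?_)
    (isClosed_eq (continuous_const.inner hT) (continuous_const.inner continuous_id)) hy
  exact inner_map_map_of_mem_eigenspace hTA (ofReal_ne_zero.mpr (ne_of_mem_of_not_mem hμ hD0)) hz
    (hmap μ hμ ▸ Submodule.mem_map_of_mem hz) x

instance [CompleteSpace H] (A : H →L[𝕜] H) (B : Set ℝ) : CompleteSpace (closedEigenSpan A B) :=
  Submodule.topologicalClosure.completeSpace _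

variable [CompleteSpace H]

theorem orthogonal_closedEigenSpan (hA : (A : H →ₗ[𝕜] H).IsSymmetric)
    (hdense : closedEigenSpan A univ = ⊤) (B : Set ℝ) :
    (closedEigenSpan A B)ᗮ = closedEigenSpan A Bᶜ := by
  have hle : closedEigenSpan A Bᶜ ≤ (closedEigenSpan A B)ᗮ := by
    refine Submodule.topologicalClosure_minimal _ (iSup₂_le fun μ hμ x hx => ?_)
      (Submodule.isClosed_orthogonal _)
    refine mem_orthogonal_closedEigenSpan_iff.mpr fun ν hν => ?_
    exact (hA.orthogonalFamily_eigenspaces_ofReal.isOrtho (ne_of_mem_of_not_mem hν hμ)).symm.le hx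
  have hbot : (closedEigenSpan A Bᶜ)ᗮ ⊓ (closedEigenSpan A B)ᗮ = ⊥ := by
    rw [Submodule.inf_orthogonal, ← Submodule.orthogonal_closure, eq_bot_iff,
      ← Submodule.top_orthogonal_eq_bot, ← hdense]
    refine Submodule.orthogonal_le (Submodule.topologicalClosure_mono ?_)
    refine iSup₂_le fun μ _ => ?_
    by_cases hμ : μ ∈ B
    · exact le_sup_of_le_right (eigenspace_le_closedEigenSpan hμ)
    · exact le_sup_of_le_left (eigenspace_le_closedEigenSpan hμ)
  simpa [hbot] using (Submodule.sup_orthogonal_inf_of_hasOrthogonalProjection hle).symm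

theorem map_eigenspace_eq_of_forall_gt (hA : (A : H →ₗ[𝕜] H).IsSymmetric)
    (hdense : closedEigenSpan A univ = ⊤) {S : H →ₗ[𝕜] H} (hS : Function.Injective S)
    (hSA : ∀ x y : H, ⟪S x, A (S y)⟫_𝕜 = ⟪x, A y⟫_𝕜) {μ : ℝ}
    [FiniteDimensional 𝕜 (eigenspace (A : H →ₗ[𝕜] H) μ)]
    (hnorm : ∀ x, μ * ‖S x‖ ^ 2 ≤ μ * ‖x‖ ^ 2)
    (hgt : ∀ ν : ℝ, μ < ν → HasEigenvalue (A : H →ₗ[𝕜] H) ν →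
      ν ≠ 0 ∧ (eigenspace (A : H →ₗ[𝕜] H) ν).map S = eigenspace (A : H →ₗ[𝕜] H) ν) :
    (eigenspace (A : H →ₗ[𝕜] H) μ).map S = eigenspace (A : H →ₗ[𝕜] H) μ := by
  have hmaps : ∀ z ∈ eigenspace (A : H →ₗ[𝕜] H) μ, S z ∈ eigenspace (A : H →ₗ[𝕜] H) μ := by
    intro z hz
    have horth : S z ∈ (closedEigenSpan A (Ioi μ))ᗮ := by
      refine mem_orthogonal_closedEigenSpan_iff.mpr fun ν hν w hw => ?_
      by_cases hev : HasEigenvalue (A : H →ₗ[𝕜] H) ν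
      · obtain ⟨hν0, hmap⟩ := hgt ν hν hev
        obtain ⟨z', hz', rfl⟩ := hmap.symm ▸ hw
        rw [inner_eq_zero_symm, inner_map_map_of_mem_eigenspace hSA (ofReal_ne_zero.mpr hν0) hz'
          (hmap ▸ Submodule.mem_map_of_mem hz')]
        exact (hA.orthogonalFamily_eigenspaces_ofReal.isOrtho (ne_of_gt hν)) hz' z hz
      · rw [hasEigenvalue_iff, not_not] at hev
        rw [hev, Submodule.mem_bot] at hw
        rw [hw, inner_zero_left]
    rw [orthogonal_closedEigenSpan hA hdense, compl_Ioi] at horth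
    refine mem_eigenspace_of_re_inner_self_apply_eq hA (fun ν hν => hν) horth
      (le_antisymm (re_inner_self_apply_le_of_mem_closedEigenSpan hA (fun ν hν => hν) horth) ?_)
    have := congrArg re (hSA z z)
    rw [this, re_inner_self_apply_of_mem_eigenspace hz]
    exact hnorm z
  exact Submodule.eq_of_le_of_finrank_eq (Submodule.map_le_iff_le_comap.mpr hmaps)
    (Submodule.equivMapOfInjective S hS _).finrank_eq.symm

theorem map_eigenspace_eq_of_exists_max (hA : (A : H →ₗ[𝕜] H).IsSymmetric)
    (hdense : closedEigenSpan A univ = ⊤) {S : H →ₗ[𝕜] H} (hS : Function.Injective S)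
    (hSA : ∀ x y : H, ⟪S x, A (S y)⟫_𝕜 = ⟪x, A y⟫_𝕜) {D : Set ℝ} (hD0 : 0 ∉ D)
    (hup : ∀ μ ∈ D, ∀ ν : ℝ, μ < ν → HasEigenvalue (A : H →ₗ[𝕜] H) ν → ν ∈ D)
    (hmax : ∀ D' ⊆ D, D'.Nonempty → ∃ m ∈ D', ∀ b ∈ D', b ≤ m)
    (hfd : ∀ μ ∈ D, FiniteDimensional 𝕜 (eigenspace (A : H →ₗ[𝕜] H) μ))
    (hnorm : ∀ μ ∈ D, ∀ x, μ * ‖S x‖ ^ 2 ≤ μ * ‖x‖ ^ 2) :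
    ∀ μ ∈ D, (eigenspace (A : H →ₗ[𝕜] H) μ).map S = eigenspace (A : H →ₗ[𝕜] H) μ := by
  by_contra! ⟨μ, hμ, hne⟩
  obtain ⟨m, ⟨hmD, hm⟩, hmax⟩ := hmax {μ ∈ D | (eigenspace (A : H →ₗ[𝕜] H) μ).map S ≠
    eigenspace (A : H →ₗ[𝕜] H) μ} (sep_subset _ _) ⟨μ, hμ, hne⟩
  have := hfd m hmD
  refine hm (map_eigenspace_eq_of_forall_gt hA hdense hS hSA (hnorm m hmD) fun ν hmν hν => ?_)
  have hνD := hup m hmD ν hmν hν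
  exact ⟨ne_of_mem_of_not_mem hνD hD0, by_contra fun h => (hmax ν ⟨hνD, h⟩).not_gt hmν⟩

theorem map_eigenspace_eq_of_exists_min (hA : (A : H →ₗ[𝕜] H).IsSymmetric)
    (hdense : closedEigenSpan A univ = ⊤) {T : H →ₗ[𝕜] H} (hT : Function.Bijective T)
    (hTA : ∀ x y : H, ⟪T x, A (T y)⟫_𝕜 = ⟪x, A y⟫_𝕜) {D : Set ℝ} (hD0 : 0 ∉ D)
    (hdown : ∀ μ ∈ D, ∀ ν : ℝ, ν < μ → HasEigenvalue (A : H →ₗ[𝕜] H) ν → ν ∈ D)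
    (hmin : ∀ D' ⊆ D, D'.Nonempty → ∃ m ∈ D', ∀ b ∈ D', m ≤ b)
    (hfd : ∀ μ ∈ D, FiniteDimensional 𝕜 (eigenspace (A : H →ₗ[𝕜] H) μ))
    (hnorm : ∀ μ ∈ D, ∀ x, μ * ‖T x‖ ^ 2 ≤ μ * ‖x‖ ^ 2) :
    ∀ μ ∈ D, (eigenspace (A : H →ₗ[𝕜] H) μ).map T = eigenspace (A : H →ₗ[𝕜] H) μ := by
  set e := LinearEquiv.ofBijective T hT
  have hTe : ∀ x, T (e.symm x) = x := e.apply_symm_apply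
  have hneg : ∀ μ : ℝ, eigenspace ((-A : H →L[𝕜] H) : H →ₗ[𝕜] H) μ
      = eigenspace (A : H →ₗ[𝕜] H) (-μ : ℝ) := fun μ => by
    rw [ContinuousLinearMap.toLinearMap_neg, eigenspace_neg, ofReal_neg]
  have key := map_eigenspace_eq_of_exists_max (A := -A) (S := e.symm) (D := -D)
    (fun x y => by simpa using hA x y) (by rw [← neg_univ, closedEigenSpan_neg, hdense])
    e.symm.injective (fun x y => by
      simpa [inner_neg_right, hTe] using (hTA (e.symm x) (e.symm y)).symm)
    (by simpa using hD0)
    (fun μ hμ ν hμν hν => hdown (-μ) hμ (-ν) (neg_lt_neg hμν) (by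
      rwa [hasEigenvalue_iff, ← hneg, ← hasEigenvalue_iff]))
    (fun D' hD' hne => by
      obtain ⟨m, hm, hmin⟩ := hmin (-D') (neg_subset.mpr hD') hne.neg
      exact ⟨-m, hm, fun b hb => le_neg.mpr (hmin (-b) (by simpa using hb))⟩)
    (fun μ hμ => hneg μ ▸ hfd (-μ) hμ)
    (fun μ hμ x => by
      have := hnorm (-μ) hμ (e.symm x)
      rw [hTe] at this
      simp only [LinearEquiv.coe_coe]
      linarith)
  intro μ hμ
  have := key (-μ) (by simpa using hμ)
  rw [hneg, neg_neg, Submodule.map_symm_eq_iff] at this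
  exact this

theorem image_closedEigenSpan {T : H →ₗ[𝕜] H} (hT : Continuous T) (hbij : Function.Bijective T)
    {D : Set ℝ}
    (hmap : ∀ μ ∈ D, (eigenspace (A : H →ₗ[𝕜] H) μ).map T = eigenspace (A : H →ₗ[𝕜] H) μ) :
    T '' closedEigenSpan A D = closedEigenSpan A D := by
  set e := (LinearEquiv.ofBijective T hbij).toContinuousLinearEquivOfContinuous hT
  have hspan : (⨆ μ ∈ D, eigenspace (A : H →ₗ[𝕜] H) μ).map T
      = ⨆ μ ∈ D, eigenspace (A : H →ₗ[𝕜] H) μ := by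
    simp only [Submodule.map_iSup]
    exact iSup_congr fun μ => iSup_congr fun hμ => hmap μ hμ
  rw [closedEigenSpan, Submodule.topologicalClosure_coe, show ⇑T = ⇑e from rfl, e.image_closure,
    show ⇑e = ⇑T from rfl, ← Submodule.map_coe, hspan]

theorem closedEigenSpan_invariant_of_map_eigenspace_eq {T : H →ₗ[𝕜] H} (hT : Continuous T)
    (hbij : Function.Bijective T) (hTA : ∀ x y : H, ⟪T x, A (T y)⟫_𝕜 = ⟪x, A y⟫_𝕜) {D : Set ℝ}
    (hD0 : 0 ∉ D)
    (hmap : ∀ μ ∈ D, (eigenspace (A : H →ₗ[𝕜] H) μ).map T = eigenspace (A : H →ₗ[𝕜] H) μ) :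
    T '' closedEigenSpan A D = closedEigenSpan A D ∧
      BijOn T (closedEigenSpan A D) (closedEigenSpan A D) ∧
      ∀ x ∈ (closedEigenSpan A D : Set H), ∀ y ∈ (closedEigenSpan A D : Set H),
        ‖T x - T y‖ = ‖x - y‖ := by
  have himage := image_closedEigenSpan hT hbij hmap
  have hbijOn := hbij.injective.injOn.bijOn_image (s := (closedEigenSpan A D : Set H))
  rw [himage] at hbijOn
  refine ⟨himage, hbijOn, fun x hx y hy => ?_⟩
  have hxy := inner_map_map_of_mem_closedEigenSpan hT hTA hD0 hmap (x - y) (sub_mem hx hy)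
  rw [← map_sub, ← sq_eq_sq₀ (norm_nonneg _) (norm_nonneg _), ← inner_self_eq_norm_sq (𝕜 := 𝕜),
    ← inner_self_eq_norm_sq (𝕜 := 𝕜), hxy]

end EigenSpan

section Ellipsoid

variable {𝕜 H : Type*} [RCLike 𝕜] [NormedAddCommGroup H] [InnerProductSpace 𝕜 H]

def ellipsoid (A : H →L[𝕜] H) : Set H := {x | re ⟪x, A x⟫_𝕜 ≤ 1}

variable {A : H →L[𝕜] H} {T : H →ₗ[𝕜] H}

theorem zero_mem_ellipsoid : (0 : H) ∈ ellipsoid A := by simp [ellipsoid]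

theorem re_inner_smul_self_apply_smul (c : 𝕜) (x : H) :
    re ⟪c • x, A (c • x)⟫_𝕜 = ‖c‖ ^ 2 * re ⟪x, A x⟫_𝕜 := by
  rw [map_smul, inner_smul_left, inner_smul_right, ← mul_assoc, RCLike.conj_mul, ← ofReal_pow,
    re_ofReal_mul]

theorem re_inner_self_apply_pos_of_norm_eq_one (h : ∀ x : H, ‖x‖ = 1 → 0 < re ⟪A x, x⟫_𝕜)
    {x : H} (hx : x ≠ 0) : 0 < re ⟪x, A x⟫_𝕜 := by
  have := h _ (norm_smul_inv_norm (𝕜 := 𝕜) hx)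
  rw [inner_re_symm, re_inner_smul_self_apply_smul] at this
  exact pos_of_mul_pos_right this (sq_nonneg _)

variable (hq : ∀ x : H, x ≠ 0 → 0 < re ⟪x, A x⟫_𝕜)
include hq

theorem exists_smul_re_inner_eq_one {x : H} (hx : x ≠ 0) :
    ∃ c : 𝕜, c ≠ 0 ∧ re ⟪c • x, A (c • x)⟫_𝕜 = 1 := by
  have hpos := hq x hx
  refine ⟨((√(re ⟪x, A x⟫_𝕜))⁻¹ : ℝ), by simpa using (Real.sqrt_pos.mpr hpos).ne', ?_⟩
  rw [re_inner_smul_self_apply_smul, norm_ofReal, sq_abs, inv_pow, Real.sq_sqrt hpos.le,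
    inv_mul_cancel₀ hpos.ne']

theorem injective_of_bijOn_ellipsoid (hT : BijOn T (ellipsoid A) (ellipsoid A)) :
    Function.Injective T := by
  refine (injective_iff_map_eq_zero T).mpr fun d hd => ?_
  by_contra hd0
  obtain ⟨c, hc, hcd⟩ := exists_smul_re_inner_eq_one hq hd0
  have : c • d = 0 := hT.injOn hcd.le zero_mem_ellipsoid (by simp [hd])
  exact (smul_ne_zero hc hd0) this

theorem surjective_of_surjOn_ellipsoid (hT : SurjOn T (ellipsoid A) (ellipsoid A)) :
    Function.Surjective T := by
  intro y
  rcases eq_or_ne y 0 with rfl | hy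
  · exact ⟨0, map_zero T⟩
  obtain ⟨c, hc, hcy⟩ := exists_smul_re_inner_eq_one hq hy
  obtain ⟨z, -, hz⟩ := hT hcy.le
  exact ⟨c⁻¹ • z, by rw [map_smul, hz, inv_smul_smul₀ hc]⟩

theorem re_inner_self_apply_map_le_of_mapsTo_ellipsoid
    (hT : MapsTo T (ellipsoid A) (ellipsoid A)) (x : H) : re ⟪T x, A (T x)⟫_𝕜 ≤ re ⟪x, A x⟫_𝕜 := by
  rcases eq_or_ne x 0 with rfl | hx
  · simp
  obtain ⟨c, hc, hcx⟩ := exists_smul_re_inner_eq_one hq hx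
  have hTc : re ⟪c • T x, A (c • T x)⟫_𝕜 ≤ 1 := map_smul T c x ▸ hT hcx.le
  rw [re_inner_smul_self_apply_smul] at hcx hTc
  exact le_of_mul_le_mul_left (hcx ▸ hTc) (by positivity)

theorem re_inner_self_apply_map_eq_of_bijOn_ellipsoid (hT : BijOn T (ellipsoid A) (ellipsoid A))
    (x : H) : re ⟪T x, A (T x)⟫_𝕜 = re ⟪x, A x⟫_𝕜 := by
  set e := LinearEquiv.ofBijective T
    ⟨injective_of_bijOn_ellipsoid hq hT, surjective_of_surjOn_ellipsoid hq hT.surjOn⟩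
  have he : MapsTo (e.symm : H →ₗ[𝕜] H) (ellipsoid A) (ellipsoid A) := by
    intro y hy
    obtain ⟨z, hz, rfl⟩ := hT.surjOn hy
    simpa [show e.symm (T z) = z from e.symm_apply_apply z] using hz
  refine le_antisymm (re_inner_self_apply_map_le_of_mapsTo_ellipsoid hq hT.mapsTo x) ?_
  simpa [show e.symm (T x) = x from e.symm_apply_apply x] using
    re_inner_self_apply_map_le_of_mapsTo_ellipsoid hq he (T x)

theorem inner_map_apply_map_of_bijOn_ellipsoid (hA : (A : H →ₗ[𝕜] H).IsSymmetric)
    (hT : BijOn T (ellipsoid A) (ellipsoid A)) (x y : H) : ⟪T x, A (T y)⟫_𝕜 = ⟪x, A y⟫_𝕜 := by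
  have hform : ∀ v, ⟪(A : H →ₗ[𝕜] H) (T v), T v⟫_𝕜 = ⟪(A : H →ₗ[𝕜] H) v, v⟫_𝕜 := fun v => by
    rw [hA, hA]
    exact RCLike.ext (re_inner_self_apply_map_eq_of_bijOn_ellipsoid hq hT v)
      (by rw [hA.im_inner_self_apply, hA.im_inner_self_apply])
  rw [← ContinuousLinearMap.coe_coe A, ← hA, ← hA, hA.inner_map_polarization (T x) (T y),
    hA.inner_map_polarization x y]
  simp only [← map_add, ← map_sub, ← map_smul, hform]

theorem norm_map_le_of_nonexpansive_on_ellipsoid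
    (hT : ∀ x ∈ ellipsoid A, ∀ y ∈ ellipsoid A, ‖T x - T y‖ ≤ ‖x - y‖) (x : H) : ‖T x‖ ≤ ‖x‖ := by
  rcases eq_or_ne x 0 with rfl | hx
  · simp
  obtain ⟨c, hc, hcx⟩ := exists_smul_re_inner_eq_one hq hx
  have := hT _ hcx.le 0 zero_mem_ellipsoid
  rw [map_zero, sub_zero, sub_zero, map_smul, norm_smul, norm_smul] at this
  exact le_of_mul_le_mul_left this (norm_pos_iff.mpr hc)

end Ellipsoid

theorem closedEigenSpans_invariant_general
    {𝕜 H : Type*} [RCLike 𝕜] [NormedAddCommGroup H] [InnerProductSpace 𝕜 H]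
    [CompleteSpace H]
    (A : H →L[𝕜] H) (hA : IsSelfAdjoint A)
    (hpos : ∃ c : ℝ, 0 < c ∧ ∀ x : H, ‖x‖ = 1 → c ≤ RCLike.re (inner 𝕜 (A x) x : 𝕜))
    (hdense : (⨆ μ : 𝕜, Module.End.eigenspace (A : H →ₗ[𝕜] H) μ).topologicalClosure = ⊤)
    (τ : ℝ)
    (hmax : ∀ D ⊆ {μ : ℝ | Module.End.HasEigenvalue (A : H →ₗ[𝕜] H) (μ : 𝕜)} ∩ Set.Ioi τ,
      D.Nonempty → ∃ m ∈ D, ∀ b ∈ D, b ≤ m)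
    (hmin : ∀ D ⊆ {μ : ℝ | Module.End.HasEigenvalue (A : H →ₗ[𝕜] H) (μ : 𝕜)} ∩ Set.Ioo 0 τ,
      D.Nonempty → ∃ m ∈ D, ∀ b ∈ D, m ≤ b)
    (hfd : ∀ μ ∈ {μ : ℝ | Module.End.HasEigenvalue (A : H →ₗ[𝕜] H) (μ : 𝕜)}
        ∩ (Set.Ioi τ ∪ Set.Ioo 0 τ),
      FiniteDimensional 𝕜 (Module.End.eigenspace (A : H →ₗ[𝕜] H) (μ : 𝕜)))
    (T : H →ₗ[𝕜] H)
    (hTbij : Set.BijOn T {x : H | RCLike.re (inner 𝕜 x (A x) : 𝕜) ≤ 1}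
      {x : H | RCLike.re (inner 𝕜 x (A x) : 𝕜) ≤ 1})
    (hTne : ∀ x ∈ {x : H | RCLike.re (inner 𝕜 x (A x) : 𝕜) ≤ 1},
      ∀ y ∈ {x : H | RCLike.re (inner 𝕜 x (A x) : 𝕜) ≤ 1}, ‖T x - T y‖ ≤ ‖x - y‖) :
    T '' (closedEigenSpan A
        ({μ : ℝ | Module.End.HasEigenvalue (A : H →ₗ[𝕜] H) (μ : 𝕜)} ∩ Set.Ioo 0 τ) : Set H)
      = (closedEigenSpan A
        ({μ : ℝ | Module.End.HasEigenvalue (A : H →ₗ[𝕜] H) (μ : 𝕜)} ∩ Set.Ioo 0 τ) : Set H) ∧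
    T '' (closedEigenSpan A
        ({μ : ℝ | Module.End.HasEigenvalue (A : H →ₗ[𝕜] H) (μ : 𝕜)} ∩ Set.Ioi τ) : Set H)
      = (closedEigenSpan A
        ({μ : ℝ | Module.End.HasEigenvalue (A : H →ₗ[𝕜] H) (μ : 𝕜)} ∩ Set.Ioi τ) : Set H) ∧
    (Set.BijOn T (closedEigenSpan A
        ({μ : ℝ | Module.End.HasEigenvalue (A : H →ₗ[𝕜] H) (μ : 𝕜)} ∩ Set.Ioo 0 τ) : Set H)
      (closedEigenSpan A
        ({μ : ℝ | Module.End.HasEigenvalue (A : H →ₗ[𝕜] H) (μ : 𝕜)} ∩ Set.Ioo 0 τ) : Set H) ∧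
     ∀ x ∈ (closedEigenSpan A
        ({μ : ℝ | Module.End.HasEigenvalue (A : H →ₗ[𝕜] H) (μ : 𝕜)} ∩ Set.Ioo 0 τ) : Set H),
       ∀ y ∈ (closedEigenSpan A
        ({μ : ℝ | Module.End.HasEigenvalue (A : H →ₗ[𝕜] H) (μ : 𝕜)} ∩ Set.Ioo 0 τ) : Set H),
         ‖T x - T y‖ = ‖x - y‖) ∧
    (Set.BijOn T (closedEigenSpan A
        ({μ : ℝ | Module.End.HasEigenvalue (A : H →ₗ[𝕜] H) (μ : 𝕜)} ∩ Set.Ioi τ) : Set H)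
      (closedEigenSpan A
        ({μ : ℝ | Module.End.HasEigenvalue (A : H →ₗ[𝕜] H) (μ : 𝕜)} ∩ Set.Ioi τ) : Set H) ∧
     ∀ x ∈ (closedEigenSpan A
        ({μ : ℝ | Module.End.HasEigenvalue (A : H →ₗ[𝕜] H) (μ : 𝕜)} ∩ Set.Ioi τ) : Set H),
       ∀ y ∈ (closedEigenSpan A
        ({μ : ℝ | Module.End.HasEigenvalue (A : H →ₗ[𝕜] H) (μ : 𝕜)} ∩ Set.Ioi τ) : Set H),
         ‖T x - T y‖ = ‖x - y‖) := by
  obtain ⟨c, hc, hcA⟩ := hpos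
  set S := {μ : ℝ | HasEigenvalue (A : H →ₗ[𝕜] H) μ}
  have hAs := hA.isSymmetric
  have hq : ∀ x : H, x ≠ 0 → 0 < re ⟪x, A x⟫_𝕜 :=
    fun x => re_inner_self_apply_pos_of_norm_eq_one fun u hu => hc.trans_le (hcA u hu)
  have hev : ∀ μ ∈ S, 0 < μ := fun μ hμ => pos_of_hasEigenvalue hq hμ
  have hS0 : ∀ D, (0 : ℝ) ∉ S ∩ D := fun D h => lt_irrefl _ (hev 0 h.1)
  have hdense' := closedEigenSpan_univ_eq_top hAs hdense
  have hTinj := injective_of_bijOn_ellipsoid hq hTbij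
  have hT : Function.Bijective T := ⟨hTinj, surjective_of_surjOn_ellipsoid hq hTbij.surjOn⟩
  have hTA := inner_map_apply_map_of_bijOn_ellipsoid hq hAs hTbij
  have hTle := norm_map_le_of_nonexpansive_on_ellipsoid hq hTne
  have hTcont : Continuous T :=
    AddMonoidHomClass.continuous_of_bound T 1 fun x => by simpa using hTle x
  have hnorm : ∀ μ ∈ S, ∀ x, μ * ‖T x‖ ^ 2 ≤ μ * ‖x‖ ^ 2 :=
    fun μ hμ x => by gcongr; exacts [(hev μ hμ).le, hTle x]
  have hminus := map_eigenspace_eq_of_exists_min (D := S ∩ Ioo 0 τ) hAs hdense' hT hTA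
    (hS0 _) (fun μ hμ ν hνμ hν => ⟨hν, hev ν hν, hνμ.trans hμ.2.2⟩)
    hmin (fun μ hμ => hfd μ ⟨hμ.1, Or.inr hμ.2⟩) (fun μ hμ => hnorm μ hμ.1)
  have hplus := map_eigenspace_eq_of_exists_max (D := S ∩ Ioi τ) hAs hdense' hTinj hTA
    (hS0 _) (fun μ hμ ν hμν hν => ⟨hν, hμ.2.trans hμν⟩)
    hmax (fun μ hμ => hfd μ ⟨hμ.1, Or.inl hμ.2⟩) (fun μ hμ => hnorm μ hμ.1)
  obtain ⟨himage_minus, hminus⟩ := closedEigenSpan_invariant_of_map_eigenspace_eq hTcont hT hTA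
    (hS0 _) hminus
  obtain ⟨himage_plus, hplus⟩ := closedEigenSpan_invariant_of_map_eigenspace_eq hTcont hT hTA
    (hS0 _) hplus
  exact ⟨himage_minus, himage_plus, hminus, hplus⟩

/-- **Claim 2.** Let `A` be a bounded self-adjoint operator (positively
bounded below on the sphere) on a separable infinite-dimensional Hilbert space `H`, whose
eigenvectors span a dense subspace of `H`. Let `τ > 0` be such that every nonempty subset
of `A⁺ = σ_p(A) ∩ (τ, ∞)` has a maximal element, every nonempty subset of
`A⁻ = σ_p(A) ∩ (0, τ)` has a minimal element, and every eigenvalue in `A⁺ ∪ A⁻` has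
finite-dimensional eigenspace. Let `H⁺` (resp. `H⁻`) be the closed linear span of the
eigenvectors with eigenvalue in `A⁺` (resp. `A⁻`). If a linear operator `T` maps the
ellipsoid `E = {x | ⟨x, Ax⟩ ≤ 1}` bijectively onto itself and is non-expansive on `E`,
then `T(H⁻) = H⁻`, `T(H⁺) = H⁺`, and the restrictions of `T` to `H⁻` and `H⁺` are
bijective isometries. -/
theorem closedEigenSpans_invariant
    {𝕜 H : Type*} [RCLike 𝕜] [NormedAddCommGroup H] [InnerProductSpace 𝕜 H]
    [CompleteSpace H] [TopologicalSpace.SeparableSpace H]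
    (hinf : ¬ FiniteDimensional 𝕜 H)
    (A : H →L[𝕜] H) (hA : IsSelfAdjoint A)
    (hpos : ∃ c : ℝ, 0 < c ∧ ∀ x : H, ‖x‖ = 1 → c ≤ RCLike.re (inner 𝕜 (A x) x : 𝕜))
    (hdense : (⨆ μ : 𝕜, Module.End.eigenspace (A : H →ₗ[𝕜] H) μ).topologicalClosure = ⊤)
    (τ : ℝ) (hτ : 0 < τ)
    (hmax : ∀ D ⊆ {μ : ℝ | Module.End.HasEigenvalue (A : H →ₗ[𝕜] H) (μ : 𝕜)} ∩ Set.Ioi τ,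
      D.Nonempty → ∃ m ∈ D, ∀ b ∈ D, b ≤ m)
    (hmin : ∀ D ⊆ {μ : ℝ | Module.End.HasEigenvalue (A : H →ₗ[𝕜] H) (μ : 𝕜)} ∩ Set.Ioo 0 τ,
      D.Nonempty → ∃ m ∈ D, ∀ b ∈ D, m ≤ b)
    (hfd : ∀ μ ∈ {μ : ℝ | Module.End.HasEigenvalue (A : H →ₗ[𝕜] H) (μ : 𝕜)}
        ∩ (Set.Ioi τ ∪ Set.Ioo 0 τ),
      FiniteDimensional 𝕜 (Module.End.eigenspace (A : H →ₗ[𝕜] H) (μ : 𝕜)))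
    (T : H →ₗ[𝕜] H)
    (hTbij : Set.BijOn T {x : H | RCLike.re (inner 𝕜 x (A x) : 𝕜) ≤ 1}
      {x : H | RCLike.re (inner 𝕜 x (A x) : 𝕜) ≤ 1})
    (hTne : ∀ x ∈ {x : H | RCLike.re (inner 𝕜 x (A x) : 𝕜) ≤ 1},
      ∀ y ∈ {x : H | RCLike.re (inner 𝕜 x (A x) : 𝕜) ≤ 1}, ‖T x - T y‖ ≤ ‖x - y‖) :
    T '' (closedEigenSpan A
        ({μ : ℝ | Module.End.HasEigenvalue (A : H →ₗ[𝕜] H) (μ : 𝕜)} ∩ Set.Ioo 0 τ) : Set H)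
      = (closedEigenSpan A
        ({μ : ℝ | Module.End.HasEigenvalue (A : H →ₗ[𝕜] H) (μ : 𝕜)} ∩ Set.Ioo 0 τ) : Set H) ∧
    T '' (closedEigenSpan A
        ({μ : ℝ | Module.End.HasEigenvalue (A : H →ₗ[𝕜] H) (μ : 𝕜)} ∩ Set.Ioi τ) : Set H)
      = (closedEigenSpan A
        ({μ : ℝ | Module.End.HasEigenvalue (A : H →ₗ[𝕜] H) (μ : 𝕜)} ∩ Set.Ioi τ) : Set H) ∧
    (Set.BijOn T (closedEigenSpan A
        ({μ : ℝ | Module.End.HasEigenvalue (A : H →ₗ[𝕜] H) (μ : 𝕜)} ∩ Set.Ioo 0 τ) : Set H)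
      (closedEigenSpan A
        ({μ : ℝ | Module.End.HasEigenvalue (A : H →ₗ[𝕜] H) (μ : 𝕜)} ∩ Set.Ioo 0 τ) : Set H) ∧
     ∀ x ∈ (closedEigenSpan A
        ({μ : ℝ | Module.End.HasEigenvalue (A : H →ₗ[𝕜] H) (μ : 𝕜)} ∩ Set.Ioo 0 τ) : Set H),
       ∀ y ∈ (closedEigenSpan A
        ({μ : ℝ | Module.End.HasEigenvalue (A : H →ₗ[𝕜] H) (μ : 𝕜)} ∩ Set.Ioo 0 τ) : Set H),
         ‖T x - T y‖ = ‖x - y‖) ∧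
    (Set.BijOn T (closedEigenSpan A
        ({μ : ℝ | Module.End.HasEigenvalue (A : H →ₗ[𝕜] H) (μ : 𝕜)} ∩ Set.Ioi τ) : Set H)
      (closedEigenSpan A
        ({μ : ℝ | Module.End.HasEigenvalue (A : H →ₗ[𝕜] H) (μ : 𝕜)} ∩ Set.Ioi τ) : Set H) ∧
     ∀ x ∈ (closedEigenSpan A
        ({μ : ℝ | Module.End.HasEigenvalue (A : H →ₗ[𝕜] H) (μ : 𝕜)} ∩ Set.Ioi τ) : Set H),
       ∀ y ∈ (closedEigenSpan A
        ({μ : ℝ | Module.End.HasEigenvalue (A : H →ₗ[𝕜] H) (μ : 𝕜)} ∩ Set.Ioi τ) : Set H),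
         ‖T x - T y‖ = ‖x - y‖) :=
  closedEigenSpans_invariant_general A hA hpos hdense τ hmax hmin hfd T hTbij hTne
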